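/- Let H : [0,∞) → [0,1] be measurable and integrable with ‖H‖₁ = ∫_0^∞ H(x) dx, and let γ > 0 satisfy 2γ‖H‖₁ < 1. For L > 1 set R_L = γ ln L and define g^L(x) = ∫_0^L H(ρ_L(0,z)/R_L) H(ρ_L(x,z)/R_L) dz for x ∈ [0,L]. Then (1/L) ∫_0^L ( e^{g^L(x)} − 1 ) dx → 0 as L → ∞. -/

import Mathlib

/-!
For `a ∈ [0, L]` the torus distance `ρ_L(a, z)` is the norm of `z - a` in `AddCircle L`, so by
periodicity `∫_0^L H(ρ_L(a, z)/R) dz = ∫_{-L/2}^{L/2} H(|t|/R) dt ≤ 2R‖H‖₁ =: C` whatever `a` is.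
Hence `g^L ≤ C` pointwise and, by Fubini, `∫_0^L g^L ≤ C²`. As `e^t - 1 ≤ t e^t`, this gives
`(1/L) ∫_0^L (e^{g^L} - 1) ≤ e^C C² / L = L^{M - 1} (M ln L)²` with `M = 2γ‖H‖₁ < 1`.
-/

open MeasureTheory Real Filter

/-- Toroidal (circular) distance on `[0, L]`. -/
noncomputable def torDist (L x y : ℝ) : ℝ := min |x - y| (L - |x - y|)

theorem torDist_comm (L x y : ℝ) : torDist L x y = torDist L y x := by
  rw [torDist, torDist, abs_sub_comm]

theorem measurable_torDist (L : ℝ) : Measurable fun p : ℝ × ℝ => torDist L p.1 p.2 := by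
  unfold torDist; fun_prop

theorem AddCircle.norm_coe_eq_abs_of_abs_le_half {L t : ℝ} (hL : 0 < L) (ht : |t| ≤ L / 2) :
    ‖(t : AddCircle L)‖ = |t| :=
  (AddCircle.norm_coe_eq_abs_iff (p := L) hL.ne').2 (by rwa [abs_of_pos hL])

theorem AddCircle.norm_coe_eq_min_abs {L t : ℝ} (hL : 0 < L) (ht : |t| ≤ L) :
    ‖(t : AddCircle L)‖ = min |t| (L - |t|) := by
  rcases le_or_gt |t| (L / 2) with hle | hlt
  · rw [norm_coe_eq_abs_of_abs_le_half hL hle, min_eq_left (by linarith)]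
  rw [min_eq_right (by linarith)]
  rcases le_or_gt 0 t with h0 | h0
  · rw [abs_of_nonneg h0] at hlt ht ⊢
    have hshift : (t : AddCircle L) = ((t - L : ℝ) : AddCircle L) := by
      rw [← AddCircle.coe_add_period L (t - L), sub_add_cancel]
    rw [hshift, norm_coe_eq_abs_of_abs_le_half hL (abs_le.2 ⟨by linarith, by linarith⟩),
      abs_of_nonpos (by linarith)]
    ring
  · rw [abs_of_neg h0] at hlt ht ⊢
    rw [← AddCircle.coe_add_period L t,
      norm_coe_eq_abs_of_abs_le_half hL (abs_le.2 ⟨by linarith, by linarith⟩),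
      abs_of_nonneg (by linarith)]
    ring

theorem torDist_eq_norm_coe {L a z : ℝ} (hL : 0 < L) (h : |z - a| ≤ L) :
    torDist L a z = ‖((z - a : ℝ) : AddCircle L)‖ := by
  rw [AddCircle.norm_coe_eq_min_abs hL h, torDist, abs_sub_comm]

theorem intervalIntegral.integral_comp_torDist {E : Type*} [NormedAddCommGroup E]
    [NormedSpace ℝ E] (f : ℝ → E) {L a : ℝ} (hL : 0 < L) (ha : a ∈ Set.Icc 0 L) :
    ∫ z in 0..L, f (torDist L a z) = ∫ t in -(L / 2)..L / 2, f |t| := by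
  set φ : ℝ → E := fun t => f ‖(t : AddCircle L)‖
  have hφ : Function.Periodic φ L := fun t => by simp only [φ, AddCircle.coe_add_period]
  calc ∫ z in 0..L, f (torDist L a z) = ∫ z in 0..L, φ (z - a) := by
        refine intervalIntegral.integral_congr fun z hz => ?_
        rw [Set.uIcc_of_le hL.le] at hz
        rw [torDist_eq_norm_coe hL (abs_le.2 ⟨by linarith [ha.2, hz.1], by linarith [ha.1, hz.2]⟩)]
    _ = ∫ t in -a..-a + L, φ t := by
        rw [intervalIntegral.integral_comp_sub_right]; ring_nf
    _ = ∫ t in -(L / 2)..-(L / 2) + L, φ t := hφ.intervalIntegral_add_eq _ _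
    _ = ∫ t in -(L / 2)..L / 2, f |t| := by
        rw [show -(L / 2) + L = L / 2 by ring]
        refine intervalIntegral.integral_congr fun t ht => ?_
        rw [Set.uIcc_of_le (by linarith)] at ht
        simp only [φ]
        rw [AddCircle.norm_coe_eq_abs_of_abs_le_half hL (abs_le.2 ht)]

theorem intervalIntegral.integral_comp_abs {f : ℝ → ℝ} {c : ℝ} (hc : 0 ≤ c)
    (hf : IntervalIntegrable f volume 0 c) :
    ∫ t in -c..c, f |t| = 2 * ∫ t in 0..c, f t := by
  have hpos : Set.EqOn (fun t => f |t|) f (Set.uIcc 0 c) := fun t ht => by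
    rw [Set.uIcc_of_le hc] at ht
    simp only [abs_of_nonneg ht.1]
  have hneg : Set.EqOn (fun t => f |t|) (fun t => f (0 - t)) (Set.uIcc (-c) 0) := fun t ht => by
    rw [Set.uIcc_of_le (by linarith)] at ht
    simp only [abs_of_nonpos ht.2, zero_sub]
  have hint_pos : IntervalIntegrable (fun t => f |t|) volume 0 c :=
    (intervalIntegrable_congr (hpos.mono Set.uIoc_subset_uIcc)).2 hf
  have hint_neg : IntervalIntegrable (fun t => f |t|) volume (-c) 0 := by
    refine (intervalIntegrable_congr (hneg.mono Set.uIoc_subset_uIcc)).2 ?_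
    simpa using (hf.comp_sub_left 0).symm
  rw [← intervalIntegral.integral_add_adjacent_intervals hint_neg hint_pos,
    intervalIntegral.integral_congr hpos, intervalIntegral.integral_congr hneg,
    intervalIntegral.integral_comp_sub_left]
  simp only [sub_zero, sub_neg_eq_add, zero_add]
  ring

theorem integral_comp_torDist_div_le {H : ℝ → ℝ} (h0 : ∀ x, 0 ≤ H x)
    (hint : IntegrableOn H (Set.Ioi 0)) {L R a : ℝ} (hL : 0 < L) (hR : 0 < R)
    (ha : a ∈ Set.Icc 0 L) :
    ∫ z in 0..L, H (torDist L a z / R) ≤ 2 * R * ∫ x in Set.Ioi 0, H x := by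
  have hc : 0 ≤ L / 2 / R := by positivity
  have hHc : IntervalIntegrable H volume 0 (L / 2 / R) :=
    (intervalIntegrable_iff_integrableOn_Ioc_of_le hc).2 (hint.mono_set Set.Ioc_subset_Ioi_self)
  calc ∫ z in 0..L, H (torDist L a z / R)
      = ∫ t in -(L / 2)..L / 2, H (|t| / R) :=
        intervalIntegral.integral_comp_torDist (fun s => H (s / R)) hL ha
    _ = R * ∫ s in -(L / 2 / R)..L / 2 / R, H |s| := by
        have habs : (fun t => H (|t| / R)) = fun t => H |t / R| := by
          funext t; rw [abs_div, abs_of_pos hR]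
        rw [habs, intervalIntegral.integral_comp_div (fun s => H |s|) hR.ne', smul_eq_mul, neg_div]
    _ = 2 * R * ∫ s in 0..L / 2 / R, H s := by
        rw [intervalIntegral.integral_comp_abs hc hHc]; ring
    _ ≤ 2 * R * ∫ x in Set.Ioi 0, H x := by
        gcongr
        rw [intervalIntegral.integral_of_le hc]
        exact setIntegral_mono_set hint (ae_of_all _ h0) Set.Ioc_subset_Ioi_self.eventuallyLE

theorem integral_integral_mul_le_mul {α β : Type*} [MeasurableSpace α] [MeasurableSpace β]
    {μ : Measure α} {ν : Measure β} [SFinite μ] [SFinite ν] {u : β → ℝ} {k : α → β → ℝ}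
    {C D : ℝ} (hint : Integrable (fun p : α × β => u p.2 * k p.1 p.2) (μ.prod ν))
    (hu : Integrable u ν) (hu0 : 0 ≤ᵐ[ν] u) (hC : 0 ≤ C) (hk : ∀ᵐ z ∂ν, ∫ x, k x z ∂μ ≤ C)
    (hD : ∫ z, u z ∂ν ≤ D) :
    ∫ x, ∫ z, u z * k x z ∂ν ∂μ ≤ C * D := by
  rw [integral_integral_swap hint]
  calc ∫ z, ∫ x, u z * k x z ∂μ ∂ν = ∫ z, u z * ∫ x, k x z ∂μ ∂ν := by
        simp_rw [integral_const_mul]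
    _ ≤ ∫ z, u z * C ∂ν := by
        refine integral_mono_ae ?_ (hu.mul_const C) ?_
        · simpa only [integral_const_mul] using hint.integral_prod_right
        · filter_upwards [hu0, hk] with z hz hkz using mul_le_mul_of_nonneg_left hkz hz
    _ ≤ C * D := by
        rw [integral_mul_const, mul_comm]
        exact mul_le_mul_of_nonneg_left hD hC

theorem Real.exp_sub_one_le_mul_exp (t : ℝ) : exp t - 1 ≤ t * exp t := by
  have h := mul_le_mul_of_nonneg_right (add_one_le_exp (-t)) (exp_pos t).le
  rw [← exp_add, neg_add_cancel, exp_zero] at h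
  linarith

theorem integral_exp_sub_one_le {α : Type*} [MeasurableSpace α] {μ : Measure α} {g : α → ℝ}
    {C : ℝ} (hg : Integrable g μ) (hg0 : 0 ≤ᵐ[μ] g) (hgC : ∀ᵐ x ∂μ, g x ≤ C) :
    ∫ x, (exp (g x) - 1) ∂μ ≤ exp C * ∫ x, g x ∂μ := by
  rw [← integral_const_mul]
  refine integral_mono_of_nonneg ?_ (hg.const_mul _) ?_
  · filter_upwards [hg0] with x hx
    linarith [add_one_le_exp (g x)]
  · filter_upwards [hg0, hgC] with x hx hxC
    calc exp (g x) - 1 ≤ g x * exp (g x) := exp_sub_one_le_mul_exp (g x)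
      _ ≤ g x * exp C := by gcongr
      _ = exp C * g x := mul_comm _ _

/-- The function `g^L` of the paper, at a general scale `R`. -/
noncomputable def torusCorrelation (H : ℝ → ℝ) (L R x : ℝ) : ℝ :=
  ∫ z in 0..L, H (torDist L 0 z / R) * H (torDist L x z / R)

section torusCorrelation

variable {H : ℝ → ℝ} {L R : ℝ}

theorem integrableOn_comp_torDist_div (hmeas : Measurable H) (h0 : ∀ x, 0 ≤ H x)
    (h1 : ∀ x, H x ≤ 1) (a : ℝ) :
    IntegrableOn (fun z => H (torDist L a z / R)) (Set.Ioc 0 L) :=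
  Integrable.of_mem_Icc 0 1
    (hmeas.comp (((measurable_torDist L).comp
      (measurable_const.prodMk measurable_id)).div_const R)).aemeasurable
    (ae_of_all _ fun _ => ⟨h0 _, h1 _⟩)

theorem integrable_torusKernel (hmeas : Measurable H) (h0 : ∀ x, 0 ≤ H x) (h1 : ∀ x, H x ≤ 1) :
    Integrable (fun p : ℝ × ℝ => H (torDist L 0 p.2 / R) * H (torDist L p.1 p.2 / R))
      ((volume.restrict (Set.Ioc 0 L)).prod (volume.restrict (Set.Ioc 0 L))) := by
  refine Integrable.of_mem_Icc 0 1 ?_ (ae_of_all _ fun p =>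
    ⟨mul_nonneg (h0 _) (h0 _), mul_le_one₀ (h1 _) (h0 _) (h1 _)⟩)
  have h2 : Measurable fun p : ℝ × ℝ => torDist L 0 p.2 :=
    (measurable_torDist L).comp (measurable_const.prodMk measurable_snd)
  exact ((hmeas.comp (h2.div_const R)).mul
    (hmeas.comp ((measurable_torDist L).div_const R))).aemeasurable

theorem intervalIntegrable_torusCorrelation (hmeas : Measurable H) (h0 : ∀ x, 0 ≤ H x)
    (h1 : ∀ x, H x ≤ 1) (hL : 0 ≤ L) :
    IntervalIntegrable (torusCorrelation H L R) volume 0 L := by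
  rw [intervalIntegrable_iff_integrableOn_Ioc_of_le hL]
  have := (integrable_torusKernel (L := L) (R := R) hmeas h0 h1).integral_prod_left
  refine this.congr (ae_of_all _ fun x => ?_)
  simp only [torusCorrelation, intervalIntegral.integral_of_le hL]

theorem torusCorrelation_nonneg (h0 : ∀ x, 0 ≤ H x) (hL : 0 ≤ L) (x : ℝ) :
    0 ≤ torusCorrelation H L R x :=
  intervalIntegral.integral_nonneg hL fun _ _ => mul_nonneg (h0 _) (h0 _)

theorem torusCorrelation_le (hmeas : Measurable H) (h0 : ∀ x, 0 ≤ H x) (h1 : ∀ x, H x ≤ 1)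
    (hint : IntegrableOn H (Set.Ioi 0)) (hL : 0 < L) (hR : 0 < R) {x : ℝ}
    (hx : x ∈ Set.Icc 0 L) :
    torusCorrelation H L R x ≤ 2 * R * ∫ x in Set.Ioi 0, H x := by
  refine le_trans ?_ (integral_comp_torDist_div_le h0 hint hL hR hx)
  simp only [torusCorrelation, intervalIntegral.integral_of_le hL.le]
  exact integral_mono_of_nonneg (ae_of_all _ fun _ => mul_nonneg (h0 _) (h0 _))
    (integrableOn_comp_torDist_div hmeas h0 h1 x)
    (ae_of_all _ fun _ => mul_le_of_le_one_left (h0 _) (h1 _))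

theorem integral_torusCorrelation_le (hmeas : Measurable H) (h0 : ∀ x, 0 ≤ H x)
    (h1 : ∀ x, H x ≤ 1) (hint : IntegrableOn H (Set.Ioi 0)) (hL : 0 < L) (hR : 0 < R) :
    ∫ x in 0..L, torusCorrelation H L R x ≤ (2 * R * ∫ x in Set.Ioi 0, H x) ^ 2 := by
  have hK : 0 ≤ 2 * R * ∫ x in Set.Ioi 0, H x :=
    mul_nonneg (by positivity) (setIntegral_nonneg measurableSet_Ioi fun x _ => h0 x)
  simp only [intervalIntegral.integral_of_le hL.le, torusCorrelation]
  rw [sq]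
  refine integral_integral_mul_le_mul (integrable_torusKernel hmeas h0 h1)
    (integrableOn_comp_torDist_div hmeas h0 h1 0) (ae_of_all _ fun _ => h0 _) hK ?_ ?_
  · refine ae_restrict_of_forall_mem measurableSet_Ioc fun z hz => ?_
    simp_rw [torDist_comm _ _ z, ← intervalIntegral.integral_of_le hL.le]
    exact integral_comp_torDist_div_le h0 hint hL hR (Set.Ioc_subset_Icc_self hz)
  · rw [← intervalIntegral.integral_of_le hL.le]
    exact integral_comp_torDist_div_le h0 hint hL hR ⟨le_rfl, hL.le⟩

theorem integral_exp_torusCorrelation_sub_one_le (hmeas : Measurable H)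
    (h0 : ∀ x, 0 ≤ H x) (h1 : ∀ x, H x ≤ 1) (hint : IntegrableOn H (Set.Ioi 0)) (hL : 0 < L) (hR : 0 < R) :
    ∫ x in 0..L, (exp (torusCorrelation H L R x) - 1) ≤
      exp (2 * R * ∫ x in Set.Ioi 0, H x) * (2 * R * ∫ x in Set.Ioi 0, H x) ^ 2 := by
  have hg := intervalIntegrable_torusCorrelation (R := R) hmeas h0 h1 hL.le
  rw [intervalIntegral.integral_of_le hL.le]
  calc ∫ x in Set.Ioc 0 L, (exp (torusCorrelation H L R x) - 1)
      ≤ exp (2 * R * ∫ x in Set.Ioi 0, H x) * ∫ x in Set.Ioc 0 L, torusCorrelation H L R x :=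
        integral_exp_sub_one_le hg.1 (ae_of_all _ (torusCorrelation_nonneg h0 hL.le))
          (ae_restrict_of_forall_mem measurableSet_Ioc fun x hx =>
            torusCorrelation_le hmeas h0 h1 hint hL hR (Set.Ioc_subset_Icc_self hx))
    _ ≤ exp (2 * R * ∫ x in Set.Ioi 0, H x) * (2 * R * ∫ x in Set.Ioi 0, H x) ^ 2 := by
        rw [← intervalIntegral.integral_of_le hL.le]
        gcongr
        exact integral_torusCorrelation_le hmeas h0 h1 hint hL hR

theorem integral_exp_torusCorrelation_sub_one_nonneg (h0 : ∀ x, 0 ≤ H x) (hL : 0 ≤ L) :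
    0 ≤ ∫ x in 0..L, (exp (torusCorrelation H L R x) - 1) :=
  intervalIntegral.integral_nonneg hL fun x _ => by
    linarith [add_one_le_exp (torusCorrelation H L R x), torusCorrelation_nonneg (R := R) h0 hL x]

end torusCorrelation

theorem tendsto_one_div_mul_exp_mul_log_mul_sq {M : ℝ} (hM : M < 1) :
    Tendsto (fun L => 1 / L * (exp (M * log L) * (M * log L) ^ 2)) atTop (nhds 0) := by
  have h := ((tendsto_rpow_mul_exp_neg_mul_atTop_nhds_zero 2 (1 - M) (by linarith)).comp
    tendsto_log_atTop).const_mul (M ^ 2)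
  rw [mul_zero] at h
  refine h.congr' ?_
  filter_upwards [eventually_gt_atTop 0] with L hL
  have hexp : exp (-(1 - M) * log L) = exp (M * log L) * L⁻¹ := by
    rw [show -(1 - M) * log L = M * log L + -log L by ring, exp_add, exp_neg, exp_log hL]
  simp only [Function.comp, rpow_two, hexp]
  field_simp

/-- With `R_L = γ ln L` and `g^L(x) = ∫_0^L H(ρ_L(0,z)/R_L) H(ρ_L(x,z)/R_L) dz`,
if `2γ‖H‖₁ < 1` then `(1/L) ∫_0^L (e^{g^L(x)} − 1) dx → 0` as `L → ∞`. -/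
theorem stmt_6 (H : ℝ → ℝ)
    (hmeas : Measurable H) (h0 : ∀ x, 0 ≤ H x) (h1 : ∀ x, H x ≤ 1)
    (hint : IntegrableOn H (Set.Ioi 0))
    (γ : ℝ) (hγ : 0 < γ) (hcrit : 2 * γ * (∫ x in Set.Ioi (0:ℝ), H x) < 1) :
    Tendsto
      (fun L : ℝ => (1 / L) *
        ∫ x in (0:ℝ)..L,
          (Real.exp (∫ z in (0:ℝ)..L,
              H (torDist L 0 z / (γ * Real.log L)) * H (torDist L x z / (γ * Real.log L))) - 1))
      atTop (nhds 0) := by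
  refine squeeze_zero' ?_ ?_ (tendsto_one_div_mul_exp_mul_log_mul_sq hcrit)
  · filter_upwards [eventually_gt_atTop 0] with L hL
    exact mul_nonneg (by positivity) (integral_exp_torusCorrelation_sub_one_nonneg h0 hL.le)
  · filter_upwards [eventually_gt_atTop 1] with L hL
    have hR : 0 < γ * log L := mul_pos hγ (log_pos hL)
    rw [show 2 * γ * (∫ x in Set.Ioi 0, H x) * log L = 2 * (γ * log L) * ∫ x in Set.Ioi 0, H x by
      ring]
    gcongr
    exact integral_exp_torusCorrelation_sub_one_le hmeas h0 h1 hint (by linarith) hR
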